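/- arXiv:2310.00925 — 3 statements merged into one kernel-verified Lean document; each statement's English description precedes it below -/
import Mathlib

section
/- Let F : ℝ → ℝ be bounded and suppose every solution of the differential inclusion g(δ(t)⁻) ≤ δ'(t) ≤ g(δ(t)⁺) a.e. with δ(0) = 0 is M-Lipschitz with M = sup|F|. Define δ̄(t) := sup over all M-Lipschitz solutions δ of δ(t), and δ̲(t) := inf over all M-Lipschitz solutions of δ(t). Then δ̄ and δ̲ are themselves M-Lipschitz solutions of the differential inclusion; i.e., maximal and minimal solutions exist. Here g(s⁻) := f(h, μ(int W(s))) and g(s⁺) := f(h, μ(cl W(s))) where s ↦ μ(int W(s)) is lower semicontinuous and s ↦ μ(cl W(s)) is upper semicontinuous, both monotone in s. -/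
open Metric Set MeasureTheory Filter
open scoped Topology

/-- For a continuous monotone function, the integral of the derivative over `Ioc a b`
is at most the increment. -/
theorem aux_monotone_integral_deriv_le {g : ℝ → ℝ} (hg : Monotone g) (hgc : Continuous g)
    {a b : ℝ} (hab : a ≤ b) :
    ∫ t in Ioc a b, deriv g t ≤ g b - g a := by
  set sf := hg.stieltjesFunction with hsf
  have hsfe : ∀ x, sf x = g x := by
    intro x
    rw [hsf, hg.stieltjesFunction_eq]
    exact rightLim_eq_of_tendsto (
      (hgc.tendsto x).mono_left nhdsWithin_le_nhds)
  have hderiv : ∀ᵐ x, deriv g x = (sf.measure.rnDeriv volume x).toReal := by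
    filter_upwards [hg.ae_hasDerivAt] with x hx using hx.deriv
  have hIoc : sf.measure (Ioc a b) ≠ ⊤ := by
    rw [sf.measure_Ioc]; exact ENNReal.ofReal_ne_top
  calc ∫ t in Ioc a b, deriv g t
      = ∫ t in Ioc a b, (sf.measure.rnDeriv volume t).toReal := by
        refine integral_congr_ae (ae_restrict_of_ae ?_)
        exact hderiv
    _ ≤ (sf.measure (Ioc a b)).toReal := Measure.setIntegral_toReal_rnDeriv_le hIoc
    _ = g b - g a := by
        rw [sf.measure_Ioc, ENNReal.toReal_ofReal]
        · rw [hsfe, hsfe]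
        · rw [hsfe, hsfe]; exact sub_nonneg.2 (hg hab)

theorem aux_deriv_abs_le {M : NNReal} {δ : ℝ → ℝ} (hl : LipschitzWith M δ) (t : ℝ) :
    |deriv δ t| ≤ M := by
  by_cases hd : DifferentiableAt ℝ δ t
  · have h1 := hd.hasDerivAt
    rw [hasDerivAt_iff_tendsto_slope] at h1
    have h2 : Tendsto (fun s => |slope δ t s|) (𝓝[≠] t) (𝓝 |deriv δ t|) :=
      h1.abs
    refine le_of_tendsto h2 ?_
    filter_upwards [self_mem_nhdsWithin] with s hs
    rw [slope_def_field, div_eq_mul_inv, abs_mul, abs_inv, ← div_eq_mul_inv]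
    rw [div_le_iff₀ (abs_pos.2 (sub_ne_zero.2 hs))]
    have := hl.dist_le_mul s t
    rwa [Real.dist_eq, Real.dist_eq] at this
  · rw [deriv_zero_of_not_differentiableAt hd]
    simpa using M.2
theorem aux_integrable_deriv {M : NNReal} {δ : ℝ → ℝ} (hl : LipschitzWith M δ) (a b : ℝ) :
    IntegrableOn (deriv δ) (Ioc a b) volume := by
  refine Integrable.mono' (integrable_const (M : ℝ)) ?_ ?_
  · exact (measurable_deriv δ).aestronglyMeasurable
  · exact Eventually.of_forall fun t => by
      simpa [Real.norm_eq_abs] using aux_deriv_abs_le hl t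

theorem aux_lipschitz_ftc {M : NNReal} {δ : ℝ → ℝ} (hl : LipschitzWith M δ) {a b : ℝ}
    (hab : a ≤ b) : δ b - δ a = ∫ t in Ioc a b, deriv δ t := by
  have hcont : Continuous δ := hl.continuous
  have hmul : ∀ x : ℝ, HasDerivAt (fun t : ℝ => (M : ℝ) * t) (M : ℝ) x := fun x => by
    simpa using (hasDerivAt_id x).const_mul (M : ℝ)
  have hdist : ∀ s t : ℝ, |δ s - δ t| ≤ (M : ℝ) * |s - t| := fun s t => by
    have := hl.dist_le_mul s t
    rwa [Real.dist_eq, Real.dist_eq] at this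
  have hconst : ∫ _t in Ioc a b, (M : ℝ) = (M : ℝ) * (b - a) := by
    rw [setIntegral_const, Real.volume_real_Ioc_of_le hab,
      smul_eq_mul, mul_comm]
  have hint := aux_integrable_deriv hl a b
  -- g₁ = δ + M • id is monotone continuous
  have h1 : ∫ t in Ioc a b, deriv δ t ≤ δ b - δ a := by
    have hg1m : Monotone (fun t => δ t + (M : ℝ) * t) := by
      intro s t hst
      have := (abs_le.1 (hdist s t)).2
      have habs : |s - t| = t - s := by rw [abs_sub_comm, abs_of_nonneg (sub_nonneg.2 hst)]
      rw [habs] at this; dsimp only; linarith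
    have hg1c : Continuous (fun t => δ t + (M : ℝ) * t) :=
      hcont.add (continuous_const.mul continuous_id)
    have key := aux_monotone_integral_deriv_le hg1m hg1c hab
    have hderiv1 : ∀ᵐ x, deriv (fun t => δ t + (M : ℝ) * t) x = deriv δ x + M := by
      filter_upwards [hl.ae_differentiableAt_real] with x hx
      exact (hx.hasDerivAt.add (hmul x)).deriv
    have : ∫ t in Ioc a b, deriv (fun t => δ t + (M : ℝ) * t) t
        = (∫ t in Ioc a b, deriv δ t) + (M : ℝ) * (b - a) := by
      rw [integral_congr_ae (ae_restrict_of_ae hderiv1),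
        integral_add hint (integrableOn_const measure_Ioc_lt_top.ne), hconst]
    rw [this] at key; linarith
  have h2 : δ b - δ a ≤ ∫ t in Ioc a b, deriv δ t := by
    have hg2m : Monotone (fun t => (M : ℝ) * t - δ t) := by
      intro s t hst
      have := (abs_le.1 (hdist t s)).2
      have habs : |t - s| = t - s := abs_of_nonneg (sub_nonneg.2 hst)
      rw [habs] at this; dsimp only; linarith
    have hg2c : Continuous (fun t => (M : ℝ) * t - δ t) :=
      (continuous_const.mul continuous_id).sub hcont
    have key := aux_monotone_integral_deriv_le hg2m hg2c hab
    have hderiv2 : ∀ᵐ x, deriv (fun t => (M : ℝ) * t - δ t) x = (M : ℝ) - deriv δ x := by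
      filter_upwards [hl.ae_differentiableAt_real] with x hx
      exact ((hmul x).sub hx.hasDerivAt).deriv
    have : ∫ t in Ioc a b, deriv (fun t => (M : ℝ) * t - δ t) t
        = (M : ℝ) * (b - a) - ∫ t in Ioc a b, deriv δ t := by
      rw [integral_congr_ae (ae_restrict_of_ae hderiv2),
        integral_sub (integrableOn_const (C := (M : ℝ)) measure_Ioc_lt_top.ne) hint, hconst]
    rw [this] at key; linarith
  linarith

theorem aux_incr_le {M : NNReal} {δ : ℝ → ℝ} (hl : LipschitzWith M δ) {a b C : ℝ}
    (hab : a ≤ b) (hC : ∀ᵐ t ∂(volume.restrict (Ioc a b)), deriv δ t ≤ C) :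
    δ b - δ a ≤ C * (b - a) := by
  rw [aux_lipschitz_ftc hl hab]
  calc ∫ t in Ioc a b, deriv δ t ≤ ∫ _t in Ioc a b, C :=
        integral_mono_ae (aux_integrable_deriv hl a b)
          (integrableOn_const measure_Ioc_lt_top.ne) hC
    _ = C * (b - a) := by
        rw [setIntegral_const, Real.volume_real_Ioc_of_le hab,
          smul_eq_mul, mul_comm]

theorem aux_le_incr {M : NNReal} {δ : ℝ → ℝ} (hl : LipschitzWith M δ) {a b C : ℝ}
    (hab : a ≤ b) (hC : ∀ᵐ t ∂(volume.restrict (Ioc a b)), C ≤ deriv δ t) :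
    C * (b - a) ≤ δ b - δ a := by
  rw [aux_lipschitz_ftc hl hab]
  calc C * (b - a) = ∫ _t in Ioc a b, C := by
        rw [setIntegral_const, Real.volume_real_Ioc_of_le hab,
          smul_eq_mul, mul_comm]
    _ ≤ ∫ t in Ioc a b, deriv δ t :=
        integral_mono_ae (integrableOn_const measure_Ioc_lt_top.ne)
          (aux_integrable_deriv hl a b) hC

theorem aux_sup_sol (M : NNReal) (gm gp : ℝ → ℝ)
    (hgmlsc : LowerSemicontinuous gm) (hgpusc : UpperSemicontinuous gp)
    (hgmmono : Monotone gm) (hgpmono : Monotone gp)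
    (Sol : (ℝ → ℝ) → Prop)
    (hSol : ∀ δ, Sol δ ↔ (LipschitzWith M δ ∧ δ 0 = 0 ∧
        ∀ᵐ t ∂(MeasureTheory.volume.restrict (Set.Ici (0:ℝ))),
          DifferentiableAt ℝ δ t ∧ gm (δ t) ≤ deriv δ t ∧ deriv δ t ≤ gp (δ t)))
    (hexists : ∃ δ, Sol δ)
    (δbar : ℝ → ℝ) (hδbar : ∀ t, δbar t = sSup {y | ∃ δ, Sol δ ∧ δ t = y}) :
    Sol δbar ∧ ∀ δ, Sol δ → ∀ t, δ t ≤ δbar t := by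
  obtain ⟨δ₀, hδ₀⟩ := hexists
  set A : ℝ → Set ℝ := fun t => {y | ∃ δ, Sol δ ∧ δ t = y} with hA
  have hdist : ∀ (δ : ℝ → ℝ), LipschitzWith M δ → ∀ s u : ℝ,
      |δ s - δ u| ≤ (M : ℝ) * |s - u| := by
    intro δ hδ s u
    have := hδ.dist_le_mul s u
    rwa [Real.dist_eq, Real.dist_eq] at this
  have hne : ∀ t, (A t).Nonempty := fun t => ⟨δ₀ t, δ₀, hδ₀, rfl⟩
  have hbdd : ∀ t, BddAbove (A t) := by
    intro t
    refine ⟨(M : ℝ) * |t|, ?_⟩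
    rintro y ⟨δ, hδ, rfl⟩
    obtain ⟨hlip, h0, -⟩ := (hSol δ).1 hδ
    have := (abs_le.1 (hdist δ hlip t 0)).2
    simpa [h0] using this
  have hle : ∀ δ, Sol δ → ∀ t, δ t ≤ δbar t := by
    intro δ hδ t
    rw [hδbar t]
    exact le_csSup (hbdd t) ⟨δ, hδ, rfl⟩
  have hbarlip : LipschitzWith M δbar := by
    refine LipschitzWith.of_dist_le_mul fun s u => ?_
    rw [Real.dist_eq, Real.dist_eq]
    have key : ∀ s u : ℝ, δbar s - δbar u ≤ (M : ℝ) * |s - u| := by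
      intro s u
      rw [sub_le_iff_le_add, hδbar s]
      refine csSup_le (hne s) ?_
      rintro y ⟨δ, hδ, rfl⟩
      obtain ⟨hlip, -, -⟩ := (hSol δ).1 hδ
      have h1 := (abs_le.1 (hdist δ hlip s u)).2
      have h2 := hle δ hδ u
      linarith
    rw [abs_sub_le_iff]
    constructor
    · exact key s u
    · have := key u s; rwa [abs_sub_comm] at this
  have hbar0 : δbar 0 = 0 := by
    rw [hδbar 0]
    apply le_antisymm
    · refine csSup_le (hne 0) ?_
      rintro y ⟨δ, hδ, rfl⟩
      exact le_of_eq ((hSol δ).1 hδ).2.1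
    · exact le_csSup (hbdd 0) ⟨δ₀, hδ₀, ((hSol δ₀).1 hδ₀).2.1⟩
  have hbardist := hdist δbar hbarlip
  -- key pointwise derivative bounds at points of differentiability
  have hupper : ∀ t : ℝ, 0 ≤ t → DifferentiableAt ℝ δbar t →
      deriv δbar t ≤ gp (δbar t) := by
    intro t ht hd
    refine le_of_forall_pos_le_add fun ε hε => ?_
    obtain ⟨η, hη, hηp⟩ := Metric.eventually_nhds_iff.1
      (hgpusc (δbar t) (gp (δbar t) + ε) (lt_add_of_pos_right _ hε))
    set r : ℝ := η / ((M : ℝ) + 1) with hr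
    have hrpos : 0 < r := div_pos hη (by positivity)
    set C : ℝ := gp (δbar t) + ε with hC
    have hslope : ∀ b ∈ Ioo t (t + r), slope δbar t b ≤ C := by
      intro b hb
      have hbt : 0 < b - t := sub_pos.2 hb.1
      have hstep : ∀ δ, Sol δ → δ b - δ t ≤ C * (b - t) := by
        intro δ hδ
        obtain ⟨hlip, -, hae⟩ := (hSol δ).1 hδ
        refine aux_incr_le hlip hb.1.le ?_
        have hsub : Ioc t b ⊆ Ici (0:ℝ) := fun s hs => le_trans ht hs.1.le
        filter_upwards [ae_restrict_of_ae_restrict_of_subset hsub hae,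
          ae_restrict_mem measurableSet_Ioc] with s hs hsm
        have h1 : deriv δ s ≤ gp (δ s) := hs.2.2
        have h2 : gp (δ s) ≤ gp (δbar s) := hgpmono (hle δ hδ s)
        have h3 : gp (δbar s) < C := by
          apply hηp
          rw [Real.dist_eq]
          have h4 := (abs_le.1 (hbardist s t)).2
          have h5 := (abs_le.1 (hbardist s t)).1
          have h6 : |s - t| = s - t := abs_of_nonneg (sub_nonneg.2 hsm.1.le)
          rw [h6] at h4 h5
          have h7 : s - t < r := by
            have := hsm.2; have := hb.2; linarith
          have h8 : (M : ℝ) * r < η := by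
            have hpos : (0:ℝ) < (M:ℝ) + 1 := by positivity
            calc (M : ℝ) * r < ((M:ℝ)+1) * r :=
                  mul_lt_mul_of_pos_right (by linarith) hrpos
              _ = η := by rw [hr]; field_simp
          have h9 : (M : ℝ) * (s - t) ≤ (M : ℝ) * r :=
            mul_le_mul_of_nonneg_left h7.le M.2
          rw [abs_sub_lt_iff]
          constructor <;> nlinarith [M.2, sub_nonneg.2 hsm.1.le]
        linarith
      have hbarb : δbar b ≤ δbar t + C * (b - t) := by
        rw [hδbar b]
        refine csSup_le (hne b) ?_
        rintro y ⟨δ, hδ, rfl⟩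
        have := hstep δ hδ
        have := hle δ hδ t
        linarith
      rw [slope_def_field, div_le_iff₀ hbt]
      linarith
    have hT : Tendsto (slope δbar t) (𝓝[>] t) (𝓝 (deriv δbar t)) := by
      have := hasDerivAt_iff_tendsto_slope.1 hd.hasDerivAt
      exact this.mono_left (nhdsWithin_mono t fun x hx => ne_of_gt hx)
    refine le_of_tendsto hT ?_
    filter_upwards [Ioo_mem_nhdsGT_of_mem ⟨le_refl t, lt_add_of_pos_right t hrpos⟩]
      with b hb using hslope b hb
  have hlower : ∀ t : ℝ, 0 ≤ t → DifferentiableAt ℝ δbar t →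
      gm (δbar t) ≤ deriv δbar t := by
    intro t ht hd
    refine le_of_forall_pos_le_add fun ε hε => ?_
    set ε' : ℝ := ε / 2 with hε'
    have hε'pos : 0 < ε' := by positivity
    obtain ⟨η, hη, hηp⟩ := Metric.eventually_nhds_iff.1
      (hgmlsc (δbar t) (gm (δbar t) - ε') (sub_lt_self _ hε'pos))
    set r : ℝ := η / ((M : ℝ) + ε' + 1) with hr
    have hrpos : 0 < r := div_pos hη (by positivity)
    set C : ℝ := gm (δbar t) - ε' with hC
    have hslope : ∀ b ∈ Ioo t (t + r), C - ε' ≤ slope δbar t b := by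
      intro b hb
      have hbt : 0 < b - t := sub_pos.2 hb.1
      -- choose a near-maximal solution at time t
      obtain ⟨y, ⟨δ, hδ, rfl⟩, hy⟩ :=
        exists_lt_of_lt_csSup (hne t)
          (show δbar t - ε' * (b - t) < sSup (A t) by
            rw [← hδbar t]; nlinarith)
      obtain ⟨hlip, -, hae⟩ := (hSol δ).1 hδ
      have hstep : C * (b - t) ≤ δ b - δ t := by
        refine aux_le_incr hlip hb.1.le ?_
        have hsub : Ioc t b ⊆ Ici (0:ℝ) := fun s hs => le_trans ht hs.1.le
        filter_upwards [ae_restrict_of_ae_restrict_of_subset hsub hae,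
          ae_restrict_mem measurableSet_Ioc] with s hs hsm
        have h1 : gm (δ s) ≤ deriv δ s := hs.2.1
        have h2 : C < gm (δ s) := by
          apply hηp
          rw [Real.dist_eq]
          have h6 : |s - t| = s - t := abs_of_nonneg (sub_nonneg.2 hsm.1.le)
          have h4 := (abs_le.1 (hdist δ hlip s t)).2
          have h5 := (abs_le.1 (hdist δ hlip s t)).1
          rw [h6] at h4 h5
          have hup : δ s ≤ δbar s := hle δ hδ s
          have hup2 := (abs_le.1 (hbardist s t)).2
          rw [h6] at hup2
          have h7 : s - t < r := by
            have := hsm.2; have := hb.2; linarith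
          have h8 : ((M : ℝ) + ε') * r < η := by
            calc ((M : ℝ) + ε') * r < ((M:ℝ) + ε' + 1) * r :=
                  mul_lt_mul_of_pos_right (by linarith) hrpos
              _ = η := by rw [hr]; field_simp
          have h9 : ((M : ℝ) + ε') * (s - t) ≤ ((M : ℝ) + ε') * r := by
            refine mul_le_mul_of_nonneg_left h7.le (by positivity)
          have h10 : (M : ℝ) * (s - t) ≤ ((M : ℝ) + ε') * (s - t) := by
            nlinarith [sub_nonneg.2 hsm.1.le]
          have h11 : ε' * (b - t) ≤ ε' * r := by
            refine mul_le_mul_of_nonneg_left ?_ hε'pos.le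
            linarith [hb.2]
          rw [abs_sub_lt_iff]
          have hbts : s - t ≤ b - t := by linarith [hsm.2]
          have hdistrib : ((M:ℝ) + ε') * r = (M:ℝ) * r + ε' * r := by ring
          have h12 : (M:ℝ) * (s - t) ≤ (M:ℝ) * r := mul_le_mul_of_nonneg_left h7.le M.2
          have h14 : 0 ≤ ε' * r := mul_nonneg hε'pos.le hrpos.le
          constructor
          · linarith
          · linarith
        linarith
      have hbarb : δbar t - ε' * (b - t) + C * (b - t) ≤ δbar b := by
        have hb' : δ b ≤ δbar b := hle δ hδ b
        linarith
      rw [slope_def_field, le_div_iff₀ hbt]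
      nlinarith
    have hT : Tendsto (slope δbar t) (𝓝[>] t) (𝓝 (deriv δbar t)) := by
      have := hasDerivAt_iff_tendsto_slope.1 hd.hasDerivAt
      exact this.mono_left (nhdsWithin_mono t fun x hx => ne_of_gt hx)
    have hge : C - ε' ≤ deriv δbar t := by
      refine ge_of_tendsto hT ?_
      filter_upwards [Ioo_mem_nhdsGT_of_mem ⟨le_refl t, lt_add_of_pos_right t hrpos⟩]
        with b hb using hslope b hb
    rw [hC] at hge
    linarith
  refine ⟨(hSol δbar).2 ⟨hbarlip, hbar0, ?_⟩, hle⟩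
  filter_upwards [ae_restrict_of_ae hbarlip.ae_differentiableAt_real,
    ae_restrict_mem measurableSet_Ici] with t htd htm
  exact ⟨htd, hlower t htm htd, hupper t htm htd⟩

/-- Existence of maximal and minimal `M`-Lipschitz solutions of the
differential inclusion `g⁻(δ(t)) ≤ δ'(t) ≤ g⁺(δ(t))` a.e. with `δ(0) = 0`, where
`g⁻(s) = f(h, μ(int W(s)))` is lower semicontinuous and monotone, and
`g⁺(s) = f(h, μ(cl W(s)))` is upper semicontinuous and monotone.
The pointwise sup `δ̄` and inf `δ̲` over all `M`-Lipschitz solutions are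
themselves solutions. -/
theorem maximal_minimal_solutions_exist
    {n : ℕ} (f : ℝ → ℝ → ℝ) (M : NNReal)
    (hfb : ∀ r q, |f r q| ≤ (M : ℝ))
    (hfc : Continuous fun p : ℝ × ℝ => f p.1 p.2)
    (hfmono : ∀ r, StrictMono (f r))
    (μ : Measure (EuclideanSpace ℝ (Fin n))) [IsFiniteMeasure μ]
    (hμac : μ ≪ MeasureTheory.volume)
    (h : ℝ) (W : ℝ → Set (EuclideanSpace ℝ (Fin n)))
    (hWmono : ∀ s₁ s₂, s₁ ≤ s₂ → W s₁ ⊆ W s₂)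
    (hWbdd : ∀ s, Bornology.IsBounded (W s))
    (gm gp : ℝ → ℝ)
    (hgm : ∀ s, gm s = f h (μ (interior (W s))).toReal)
    (hgp : ∀ s, gp s = f h (μ (closure (W s))).toReal)
    (hgmlsc : LowerSemicontinuous gm) (hgpusc : UpperSemicontinuous gp)
    (hgmmono : Monotone gm) (hgpmono : Monotone gp)
    (Sol : (ℝ → ℝ) → Prop)
    (hSol : ∀ δ, Sol δ ↔ (LipschitzWith M δ ∧ δ 0 = 0 ∧
        ∀ᵐ t ∂(MeasureTheory.volume.restrict (Set.Ici (0:ℝ))),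
          DifferentiableAt ℝ δ t ∧ gm (δ t) ≤ deriv δ t ∧ deriv δ t ≤ gp (δ t)))
    (hexists : ∃ δ, Sol δ)
    (δbar δlow : ℝ → ℝ)
    (hδbar : ∀ t, δbar t = sSup {y | ∃ δ, Sol δ ∧ δ t = y})
    (hδlow : ∀ t, δlow t = sInf {y | ∃ δ, Sol δ ∧ δ t = y}) :
    Sol δbar ∧ Sol δlow ∧
      ∀ δ, Sol δ → ∀ t, 0 ≤ t → δlow t ≤ δ t ∧ δ t ≤ δbar t := by
  obtain ⟨δ₀, hδ₀⟩ := hexists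
  have hbar := aux_sup_sol M gm gp hgmlsc hgpusc hgmmono hgpmono Sol hSol ⟨δ₀, hδ₀⟩ δbar hδbar
  -- the negated system
  have hgm'lsc : LowerSemicontinuous (fun y : ℝ => -gp (-y)) := by
    intro x c hc
    have hc' : c < -gp (-x) := hc
    have h2 := hgpusc (-x) (-c) (by linarith)
    have h3 := (continuous_neg.tendsto x).eventually h2
    filter_upwards [h3] with y hy
    show c < -gp (-y)
    linarith
  have hgp'usc : UpperSemicontinuous (fun y : ℝ => -gm (-y)) := by
    intro x c hc
    have hc' : -gm (-x) < c := hc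
    have h2 := hgmlsc (-x) (-c) (by linarith)
    have h3 := (continuous_neg.tendsto x).eventually h2
    filter_upwards [h3] with y hy
    show -gm (-y) < c
    linarith
  have hgm'mono : Monotone (fun y : ℝ => -gp (-y)) := by
    intro a b hab
    show -gp (-a) ≤ -gp (-b)
    have := hgpmono (neg_le_neg hab); linarith
  have hgp'mono : Monotone (fun y : ℝ => -gm (-y)) := by
    intro a b hab
    show -gm (-a) ≤ -gm (-b)
    have := hgmmono (neg_le_neg hab); linarith
  have hneglip : ∀ g : ℝ → ℝ, LipschitzWith M g → LipschitzWith M (fun t => -g t) := by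
    intro g hg
    refine LipschitzWith.of_dist_le_mul fun x y => ?_
    have h1 := hg.dist_le_mul x y
    have h2 : dist (-g x) (-g y) = dist (g x) (g y) := by
      rw [Real.dist_eq, Real.dist_eq, show -g x - -g y = -(g x - g y) by ring, abs_neg]
    rw [h2]; exact h1
  have hSol'iff : ∀ δ : ℝ → ℝ, Sol (fun t => -δ t) ↔ (LipschitzWith M δ ∧ δ 0 = 0 ∧
      ∀ᵐ t ∂(MeasureTheory.volume.restrict (Set.Ici (0:ℝ))),
        DifferentiableAt ℝ δ t ∧ (fun y : ℝ => -gp (-y)) (δ t) ≤ deriv δ t ∧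
          deriv δ t ≤ (fun y : ℝ => -gm (-y)) (δ t)) := by
    intro δ
    rw [hSol]
    constructor
    · rintro ⟨hlip, h0, hae⟩
      refine ⟨by simpa only [neg_neg] using hneglip _ hlip, by simpa using h0, ?_⟩
      filter_upwards [hae] with t ht
      obtain ⟨hd, h1, h2⟩ := ht
      have hd' : DifferentiableAt ℝ δ t := by simpa only [neg_neg] using hd.fun_neg
      simp only [deriv.fun_neg] at h1 h2
      refine ⟨hd', ?_, ?_⟩
      · show -gp (-δ t) ≤ deriv δ t
        linarith
      · show deriv δ t ≤ -gm (-δ t)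
        linarith
    · rintro ⟨hlip, h0, hae⟩
      refine ⟨hneglip _ hlip, by simpa using h0, ?_⟩
      filter_upwards [hae] with t ht
      obtain ⟨hd, h1, h2⟩ := ht
      have h1' : -gp (-δ t) ≤ deriv δ t := h1
      have h2' : deriv δ t ≤ -gm (-δ t) := h2
      refine ⟨hd.neg, ?_, ?_⟩
      · show gm (-δ t) ≤ deriv (fun s => -δ s) t
        rw [deriv.fun_neg]; linarith
      · show deriv (fun s => -δ s) t ≤ gp (-δ t)
        rw [deriv.fun_neg]; linarith
  have hδbar' : ∀ t, (fun t => -δlow t) t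
      = sSup {y | ∃ δ : ℝ → ℝ, Sol (fun s => -δ s) ∧ δ t = y} := by
    intro t
    dsimp only
    rw [hδlow t, Real.sInf_def, neg_neg]
    congr 1
    ext y
    simp only [Set.mem_neg, Set.mem_setOf_eq]
    constructor
    · rintro ⟨δ, hδ, hval⟩
      refine ⟨fun s => -δ s, by simpa only [neg_neg] using hδ, ?_⟩
      show -δ t = y
      rw [hval]; ring
    · rintro ⟨δ, hδ, hval⟩
      refine ⟨fun s => -δ s, hδ, ?_⟩
      show -δ t = -y
      rw [hval]
  have hlow := aux_sup_sol M (fun y : ℝ => -gp (-y)) (fun y : ℝ => -gm (-y))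
    hgm'lsc hgp'usc hgm'mono hgp'mono (fun δ => Sol (fun t => -δ t)) hSol'iff
    ⟨fun t => -δ₀ t, by simpa only [neg_neg] using hδ₀⟩ (fun t => -δlow t) hδbar'
  have hsollow : Sol δlow := by
    have := hlow.1
    simpa only [neg_neg] using this
  refine ⟨hbar.1, hsollow, fun δ hδ t _ => ⟨?_, hbar.2 δ hδ t⟩⟩
  have hneg := hlow.2 (fun s => -δ s) (by simpa only [neg_neg] using hδ) t
  have hneg' : -δ t ≤ -δlow t := hneg
  linarith
end

section
/- Sub-exponential blow-down forces strict decrease: Let F : (−∞, 0] → ℝ be nonincreasing with F(0) ≤ 0, and suppose liminf_{s→0⁺} F(−s)/s^α ≤ −C for some 0 < α < 1 and C > 0. Let δ : [0,∞) → ℝ be the minimal Lipschitz solution of δ'(t) = F(δ(t)), δ(0) = 0 (with appropriate one-sided interpretation). Then δ(t) < 0 for all t > 0. Concretely: the function δ̃(t) := −(C'(1−α)/α)^{1/(1−α)} t^{1/(1−α)} satisfies δ̃'(t) = −(C'/α)(−δ̃(t))^α and is a supersolution barrier pushing δ strictly below 0 instantly, where 0 < C' < C and F(−s) ≤ −C'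 s^α for small s > 0. -/
open Set Filter Topology

/-- Sub-exponential blow-down forces strict decrease: if
`F : ℝ → ℝ` is nonincreasing on `(−∞, 0]` with `F(0) ≤ 0` and
`liminf_{s→0⁺} F(−s)/s^α ≤ −C` for some `0 < α < 1`, `C > 0`, then the minimal
Lipschitz nonpositive solution `δ` of `δ' = F(δ)`, `δ(0) = 0`, satisfies
`δ(t) < 0` for all `t > 0`. -/
theorem minimal_solution_strictly_negative
    (F : ℝ → ℝ) (hFmono : AntitoneOn F (Set.Iic (0:ℝ))) (hF0 : F 0 ≤ 0)
    (α C : ℝ) (hα : 0 < α) (hα1 : α < 1) (hC : 0 < C)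
    (hliminf : Filter.liminf (fun s : ℝ => F (-s) / s ^ α) (𝓝[>] (0:ℝ)) ≤ -C)
    (M : NNReal) (δ : ℝ → ℝ)
    (hLip : LipschitzWith M δ) (hδ0 : δ 0 = 0)
    (hδnonpos : ∀ t ≥ (0:ℝ), δ t ≤ 0)
    (hODE : ∀ t > (0:ℝ), HasDerivAt δ (F (δ t)) t)
    (hmin : ∀ δ' : ℝ → ℝ, LipschitzWith M δ' → δ' 0 = 0 →
      (∀ t ≥ (0:ℝ), δ' t ≤ 0) → (∀ t > (0:ℝ), HasDerivAt δ' (F (δ' t)) t) →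
      ∀ t ≥ (0:ℝ), δ t ≤ δ' t) :
    ∀ t > (0:ℝ), δ t < 0 := by
  -- Step 1: there is some `s > 0` with `F (-s) < 0`.
  have hs : ∃ s : ℝ, 0 < s ∧ F (-s) < 0 := by
    by_contra h
    push_neg at h
    -- then eventually `0 ≤ F(-s)/s^α`, forcing the liminf to be ≥ 0 (or junk 0)
    have hev : ∀ᶠ s in 𝓝[>] (0:ℝ), (0:ℝ) ≤ F (-s) / s ^ α := by
      filter_upwards [self_mem_nhdsWithin] with s hs
      exact div_nonneg (h s hs) (Real.rpow_nonneg (le_of_lt hs) α)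
    have hmem : (0:ℝ) ∈ {a : ℝ | ∀ᶠ s in 𝓝[>] (0:ℝ), a ≤ F (-s) / s ^ α} := hev
    have hlim : Filter.liminf (fun s : ℝ => F (-s) / s ^ α) (𝓝[>] (0:ℝ))
        = sSup {a : ℝ | ∀ᶠ s in 𝓝[>] (0:ℝ), a ≤ F (-s) / s ^ α} :=
      Filter.liminf_eq
    by_cases hbdd : BddAbove {a : ℝ | ∀ᶠ s in 𝓝[>] (0:ℝ), a ≤ F (-s) / s ^ α}
    · have : (0:ℝ) ≤ Filter.liminf (fun s : ℝ => F (-s) / s ^ α) (𝓝[>] (0:ℝ)) := by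
        rw [hlim]; exact le_csSup hbdd hmem
      linarith
    · have : Filter.liminf (fun s : ℝ => F (-s) / s ^ α) (𝓝[>] (0:ℝ)) = 0 := by
        rw [hlim]; exact Real.sSup_of_not_bddAbove hbdd
      rw [this] at hliminf; linarith
  obtain ⟨s, hs0, hFs⟩ := hs
  -- Step 2: `F 0 < 0` by antitonicity.
  have hF0neg : F 0 < 0 := by
    have : F 0 ≤ F (-s) := hFmono (by simp [le_of_lt hs0]) (by simp) (by linarith)
    linarith
  -- Step 3: if `δ t = 0` for `t > 0`, then `t` is a local max, so `F 0 = 0`, contradiction.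
  intro t ht
  rcases (hδnonpos t ht.le).lt_or_eq with h | heq
  · exact h
  · exfalso
    have hmax : IsLocalMax δ t := by
      filter_upwards [isOpen_Ioi.mem_nhds ht] with u hu
      rw [heq]
      exact hδnonpos u (le_of_lt hu)
    have := hmax.hasDerivAt_eq_zero (hODE t ht)
    rw [heq] at this
    linarith
end

section
/- Lipschitz nonlinearity prevents leaving an equilibrium: Let F : ℝ → ℝ be locally Lipschitz with F(0) = 0. Then the unique solution of δ'(t) = F(δ(t)), δ(0) = 0 on [0,∞) is δ ≡ 0. In the paper's setting: if f(h̄, ·) is locally Lipschitz, μ({u₀ < h̄}) = μ({u₀ ≤ h̄}) (so f(h̄, μ(D_{h̄}(0))) = f(h̄, μ(E_{h̄}(0))) = 0), and the perimeters Per(D_{h̄}(−s)) + Per(E_{h̄}(s)) ≤ C for 0 < s ≤ s₀ so that s ↦ μ(parallel set) is Lipschitz via the coarea formula (with bounded density Θ), then the only solution of the parallel-set ODE is identically zero, hence the h̄-level set of the solution never moves. -/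
open Set

/-- A locally Lipschitz nonlinearity with `F(0) = 0` prevents
leaving the equilibrium: any continuous solution of `δ' = F(δ)` on `(0,∞)` with
`δ(0) = 0` is identically zero on `[0,∞)`. -/
theorem lipschitz_equilibrium_unique
    (F : ℝ → ℝ) (hF : LocallyLipschitz F) (hF0 : F 0 = 0) :
    ∀ δ : ℝ → ℝ, Continuous δ → δ 0 = 0 →
      (∀ t > (0:ℝ), HasDerivAt δ (F (δ t)) t) →
      ∀ t ≥ (0:ℝ), δ t = 0 := by
  intro δ hδc hδ0 hδ' t₁ ht₁
  rcases eq_or_lt_of_le ht₁ with h | h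
  · rw [← h]; exact hδ0
  by_contra h1
  -- the set of zeros of δ in [0, t₁]
  set S : Set ℝ := {t | t ∈ Icc (0:ℝ) t₁ ∧ δ t = 0} with hS
  have hSne : S.Nonempty := ⟨0, ⟨le_rfl, le_of_lt h⟩, hδ0⟩
  have hSbdd : BddAbove S := ⟨t₁, fun x hx => hx.1.2⟩
  have hSclosed : IsClosed S := by
    have : S = Icc (0:ℝ) t₁ ∩ δ ⁻¹' {0} := by
      ext x; simp [hS, and_comm]
    rw [this]
    exact isClosed_Icc.inter (isClosed_singleton.preimage hδc)
  set a := sSup S with ha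
  have haS : a ∈ S := hSclosed.csSup_mem hSne hSbdd
  have ha0 : 0 ≤ a := haS.1.1
  have hat₁ : a < t₁ := lt_of_le_of_ne haS.1.2 (fun he => h1 (he ▸ haS.2))
  have hδa : δ a = 0 := haS.2
  have hnz : ∀ t ∈ Ioc a t₁, δ t ≠ 0 := by
    intro t ht hzt
    have : t ∈ S := ⟨⟨le_trans ha0 (le_of_lt ht.1), ht.2⟩, hzt⟩
    exact absurd (le_csSup hSbdd this) (not_le.mpr ht.1)
  -- local Lipschitz data near 0
  obtain ⟨K, s, hs, hK⟩ := hF 0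
  obtain ⟨ε, hε, hball⟩ := Metric.nhds_basis_closedBall.mem_iff.mp hs
  -- continuity: pick b ∈ (a, t₁] with |δ| ≤ ε on [a, b]
  have hcont : ∀ᶠ u in nhds a, δ u ∈ Metric.closedBall (0:ℝ) ε := by
    have : Metric.closedBall (0:ℝ) ε ∈ nhds (δ a) := by
      rw [hδa]; exact Metric.closedBall_mem_nhds _ hε
    exact hδc.continuousAt.preimage_mem_nhds this
  obtain ⟨r, hr, hrb⟩ := Metric.eventually_nhds_iff.mp hcont
  set b := min (a + r / 2) t₁ with hb
  have hab : a < b := lt_min (by linarith) hat₁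
  have hbt₁ : b ≤ t₁ := min_le_right _ _
  have hmem : ∀ t ∈ Icc a b, δ t ∈ Metric.closedBall (0:ℝ) ε := by
    intro t ht
    apply hrb
    rw [Real.dist_eq, abs_of_nonneg (by linarith [ht.1])]
    have : t ≤ a + r / 2 := le_trans ht.2 (min_le_left _ _)
    linarith
  -- Gronwall on [a', b] for a' ∈ (a, b)
  have key : ∀ a' ∈ Ioo a b, |δ b| ≤ |δ a'| * Real.exp (K * (b - a')) := by
    intro a' ha'
    have hbound := dist_le_of_trajectories_ODE_of_mem
      (v := fun _ x => F x) (s := fun _ => Metric.closedBall (0:ℝ) ε)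
      (K := K) (f := δ) (g := fun _ => (0:ℝ)) (a := a') (b := b)
      (δ := |δ a'|)
      (fun _ _ => hK.mono hball)
      hδc.continuousOn
      (fun t ht => ((hδ' t (by have := ht.1; have := ha'.1; linarith)).hasDerivWithinAt))
      (fun t ht => hmem t ⟨le_trans (le_of_lt ha'.1) ht.1, le_of_lt ht.2⟩)
      continuousOn_const
      (fun t _ => by simpa [hF0] using (hasDerivWithinAt_const t (Ici t) (0:ℝ)))
      (fun t _ => Metric.mem_closedBall_self (le_of_lt hε))
      (by rw [Real.dist_eq]; simp)
      b ⟨le_of_lt ha'.2, le_rfl⟩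
    rw [Real.dist_eq, sub_zero] at hbound
    exact hbound
  -- take a' → a⁺
  have htend : Filter.Tendsto (fun a' => |δ a'| * Real.exp (K * (b - a')))
      (nhdsWithin a (Ioi a)) (nhds 0) := by
    have : Filter.Tendsto (fun a' => |δ a'| * Real.exp (K * (b - a'))) (nhds a)
        (nhds (|δ a| * Real.exp (K * (b - a)))) := by
      exact ((hδc.abs.tendsto a).mul ((Real.continuous_exp.comp
        (continuous_const.mul (continuous_const.sub continuous_id))).tendsto a))
    rw [hδa, abs_zero, zero_mul] at this
    exact this.mono_left nhdsWithin_le_nhds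
  have hev : ∀ᶠ a' in nhdsWithin a (Ioi a), |δ b| ≤ |δ a'| * Real.exp (K * (b - a')) := by
    filter_upwards [Ioo_mem_nhdsGT_of_mem ⟨le_rfl, hab⟩] with a' ha'
    exact key a' ha'
  have : |δ b| ≤ 0 := ge_of_tendsto htend hev
  have hb0 : δ b = 0 := abs_eq_zero.mp (le_antisymm this (abs_nonneg _))
  exact hnz b ⟨hab, hbt₁⟩ hb0
end
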